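/- arXiv:2107.11612 — 6 statements merged into one kernel-verified Lean document; each statement's English description precedes it below -/
import Mathlib

section
/- The image of the map (x, y, z) ↦ (x, y, x + y + 2z) applied to the set of positive semi-definite symmetric 2×2 matrices [[x, z],[z, y]] of rank ≤ 1 is exactly the set of points (a, b, c) in the closed first octant satisfying a² + b² + c² = 2(ab + ac + bc). -/
/-! Writing `c = a + b + 2z`, the quadratic form `a² + b² + c² - 2(ab + ac + bc)` equals
`4(z² - ab)`, so the cone equation is exactly the rank condition `z² = ab`, and `z` is recovered
from the image as `(c - a - b) / 2`. The remaining constraint `c ≥ 0` is automatic: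
`z² = ab ≤ ((a + b) / 2)²` forces `|2z| ≤ a + b`. -/

lemma sq_add_sq_add_sq_eq_two_mul_iff (a b c : ℝ) :
    a ^ 2 + b ^ 2 + c ^ 2 = 2 * (a * b + a * c + b * c) ↔ ((c - a - b) / 2) ^ 2 = a * b := by
  constructor
  · intro h; linear_combination (1 / 4 : ℝ) * h
  · intro h; linear_combination 4 * h

lemma add_add_two_mul_nonneg_of_sq_eq_mul {x y z : ℝ} (hx : 0 ≤ x) (hy : 0 ≤ y)
    (h : z ^ 2 = x * y) : 0 ≤ x + y + 2 * z := by
  nlinarith [sq_nonneg (x - y)]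

/-- The image of rank ≤ 1 PSD 2×2 matrices `[[x,z],[z,y]]` (i.e. `x,y ≥ 0`,
`z² = xy`) under `(x,y,z) ↦ (x, y, x+y+2z)` is the cone surface
`a² + b² + c² = 2(ab + ac + bc)` in the closed first octant. -/
theorem stmt8 :
    {p : ℝ × ℝ × ℝ | ∃ x y z : ℝ, 0 ≤ x ∧ 0 ≤ y ∧ z ^ 2 = x * y ∧
        p = (x, y, x + y + 2 * z)}
      = {p : ℝ × ℝ × ℝ | 0 ≤ p.1 ∧ 0 ≤ p.2.1 ∧ 0 ≤ p.2.2 ∧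
          p.1 ^ 2 + p.2.1 ^ 2 + p.2.2 ^ 2
            = 2 * (p.1 * p.2.1 + p.1 * p.2.2 + p.2.1 * p.2.2)} := by
  ext ⟨a, b, c⟩
  simp only [Set.mem_ofPred_eq, Prod.mk.injEq, sq_add_sq_add_sq_eq_two_mul_iff]
  constructor
  · rintro ⟨x, y, z, hx, hy, hz, rfl, rfl, rfl⟩
    refine ⟨hx, hy, add_add_two_mul_nonneg_of_sq_eq_mul hx hy hz, ?_⟩
    convert hz using 2
    ring
  · rintro ⟨ha, hb, -, h⟩
    exact ⟨a, b, (c - a - b) / 2, ha, hb, h, rfl, rfl, by ring⟩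
end

section
/- Let m, n, p > 0 and let R(x,y,z) = (−x(p(x²−(y−z)²) + 2(m+n)yz), −y(n(y²−(z−x)²) + 2(m+p)xz), −z(m(z²−(x−y)²) + 2(n+p)xy)) and F(x,y,z) = x² + y² + z² − 2(xy + xz + yz). Then for all x, y, z ≥ 0 with F(x,y,z) = 0, R(x,y,z) · ∇F(x,y,z) = −8xyz(px + ny + mz) ≤ 0. -/
theorem ricci_dot_grad_eq (m n p x y z : ℝ) :
    (-x * (p * (x ^ 2 - (y - z) ^ 2) + 2 * (m + n) * y * z)) * (2 * (x - y - z))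
      + (-y * (n * (y ^ 2 - (z - x) ^ 2) + 2 * (m + p) * x * z)) * (2 * (-x + y - z))
      + (-z * (m * (z ^ 2 - (x - y) ^ 2) + 2 * (n + p) * x * y)) * (2 * (-x - y + z))
      = -8 * x * y * z * (p * x + n * y + m * z)
        - 2 * (x + y + z) * (p * x + n * y + m * z)
          * (x ^ 2 + y ^ 2 + z ^ 2 - 2 * (x * y + x * z + y * z)) := by
  ring

/-- Type A Ricci vector field: on the cone surface `F = 0` in the first octant,
`R · ∇F = -8xyz(px + ny + mz) ≤ 0`. -/
theorem stmt10 (m n p x y z : ℝ) (hm : 0 < m) (hn : 0 < n) (hp : 0 < p)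
    (hx : 0 ≤ x) (hy : 0 ≤ y) (hz : 0 ≤ z)
    (hF : x ^ 2 + y ^ 2 + z ^ 2 - 2 * (x * y + x * z + y * z) = 0) :
    (-x * (p * (x ^ 2 - (y - z) ^ 2) + 2 * (m + n) * y * z)) * (2 * (x - y - z))
      + (-y * (n * (y ^ 2 - (z - x) ^ 2) + 2 * (m + p) * x * z)) * (2 * (-x + y - z))
      + (-z * (m * (z ^ 2 - (x - y) ^ 2) + 2 * (n + p) * x * y)) * (2 * (-x - y + z))
      = -8 * x * y * z * (p * x + n * y + m * z)
    ∧ -8 * x * y * z * (p * x + n * y + m * z) ≤ 0 := by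
  refine ⟨by rw [ricci_dot_grad_eq, hF]; ring, ?_⟩
  have h : 0 ≤ x * y * z * (p * x + n * y + m * z) := by positivity
  linarith
end

section
/- Let ℓ ≥ 4 and let R(x,y,z) = (−x((ℓ−2)(x²−(y−z)²) + 2ℓyz), −y((ℓ−2)(y²−(z−x)²) + 2ℓxz), −z(2(z²−(x−y)²) + 4(ℓ−2)xy)) and F(x,y,z) = x² + y² + z² − 2(xy + xz + yz). Then for all x, y, z ≥ 0 with F(x,y,z) = 0, R(x,y,z) · ∇F(x,y,z) ≤ 0. -/
/-!
Writing `x = u²`, `y = v²`, `z = w²` with `u, v, w ≥ 0`, the cone factors as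
`F = -(u + v + w)(v + w - u)(u + w - v)(u + v - w)`, so in the first octant it is the union of
the three sheets `u = v + w`, `v = u + w`, `w = u + v`. On each sheet `R · ∇F` factors as
`-8` times a product of squares times a binary quadratic form in the remaining two square roots
with nonnegative coefficients once `ℓ ≥ 2`; the second sheet is the mirror image of the first
under `x ↔ y`.
-/

def ricciDotGradF (l x y z : ℝ) : ℝ :=
  (-x * ((l - 2) * (x ^ 2 - (y - z) ^ 2) + 2 * l * y * z)) * (2 * (x - y - z))
    + (-y * ((l - 2) * (y ^ 2 - (z - x) ^ 2) + 2 * l * x * z)) * (2 * (-x + y - z))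
    + (-z * (2 * (z ^ 2 - (x - y) ^ 2) + 4 * (l - 2) * x * y)) * (2 * (-x - y + z))

lemma ricciDotGradF_swap (l x y z : ℝ) : ricciDotGradF l x y z = ricciDotGradF l y x z := by
  unfold ricciDotGradF; ring

lemma ricciDotGradF_sq_add_sq_sq (l v w : ℝ) :
    ricciDotGradF l ((v + w) ^ 2) (v ^ 2) (w ^ 2) =
      -8 * (v * w * (v + w)) ^ 2 * (2 * (l - 2) * v ^ 2 + 2 * (l - 2) * (v * w) + l * w ^ 2) := by
  unfold ricciDotGradF; ring

lemma ricciDotGradF_sq_sq_add_sq (l u v : ℝ) :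
    ricciDotGradF l (u ^ 2) (v ^ 2) ((u + v) ^ 2) =
      -8 * (u * v * (u + v)) ^ 2 * (l * u ^ 2 + 4 * (u * v) + l * v ^ 2) := by
  unfold ricciDotGradF; ring

lemma ricciDotGradF_sq_add_sq_sq_nonpos {l v w : ℝ} (hl : 2 ≤ l) (hv : 0 ≤ v) (hw : 0 ≤ w) :
    ricciDotGradF l ((v + w) ^ 2) (v ^ 2) (w ^ 2) ≤ 0 := by
  rw [ricciDotGradF_sq_add_sq_sq]
  have hl2 : 0 ≤ l - 2 := by linarith
  exact mul_nonpos_of_nonpos_of_nonneg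
    (mul_nonpos_of_nonpos_of_nonneg (by norm_num) (sq_nonneg _)) (by positivity)

lemma ricciDotGradF_sq_sq_add_sq_nonpos {l u v : ℝ} (hl : 0 ≤ l) (hu : 0 ≤ u) (hv : 0 ≤ v) :
    ricciDotGradF l (u ^ 2) (v ^ 2) ((u + v) ^ 2) ≤ 0 := by
  rw [ricciDotGradF_sq_sq_add_sq]
  exact mul_nonpos_of_nonpos_of_nonneg
    (mul_nonpos_of_nonpos_of_nonneg (by norm_num) (sq_nonneg _)) (by positivity)

lemma eq_add_of_cone_sq {u v w : ℝ} (hu : 0 ≤ u) (hv : 0 ≤ v) (hw : 0 ≤ w)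
    (hF : (u ^ 2) ^ 2 + (v ^ 2) ^ 2 + (w ^ 2) ^ 2
      - 2 * (u ^ 2 * v ^ 2 + u ^ 2 * w ^ 2 + v ^ 2 * w ^ 2) = 0) :
    u = v + w ∨ v = u + w ∨ w = u + v := by
  have hfactor : (u + v + w) * ((v + w - u) * ((u + w - v) * (u + v - w))) = 0 := by
    linear_combination -hF
  simp only [mul_eq_zero] at hfactor
  rcases hfactor with h | h | h | h
  · left; linarith
  · left; linarith
  · right; left; linarith
  · right; right; linarith

/-- Type D Ricci vector field: on the cone surface `F = 0` in the first octant,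
`R · ∇F ≤ 0`, for `ℓ ≥ 4`. -/
theorem stmt11 (l x y z : ℝ) (hl : 4 ≤ l)
    (hx : 0 ≤ x) (hy : 0 ≤ y) (hz : 0 ≤ z)
    (hF : x ^ 2 + y ^ 2 + z ^ 2 - 2 * (x * y + x * z + y * z) = 0) :
    (-x * ((l - 2) * (x ^ 2 - (y - z) ^ 2) + 2 * l * y * z)) * (2 * (x - y - z))
      + (-y * ((l - 2) * (y ^ 2 - (z - x) ^ 2) + 2 * l * x * z)) * (2 * (-x + y - z))
      + (-z * (2 * (z ^ 2 - (x - y) ^ 2) + 4 * (l - 2) * x * y)) * (2 * (-x - y + z))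
      ≤ 0 := by
  change ricciDotGradF l x y z ≤ 0
  obtain ⟨u, hu, rfl⟩ : ∃ u, 0 ≤ u ∧ x = u ^ 2 := ⟨√x, Real.sqrt_nonneg x, (Real.sq_sqrt hx).symm⟩
  obtain ⟨v, hv, rfl⟩ : ∃ v, 0 ≤ v ∧ y = v ^ 2 := ⟨√y, Real.sqrt_nonneg y, (Real.sq_sqrt hy).symm⟩
  obtain ⟨w, hw, rfl⟩ : ∃ w, 0 ≤ w ∧ z = w ^ 2 := ⟨√z, Real.sqrt_nonneg z, (Real.sq_sqrt hz).symm⟩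
  have hl2 : 2 ≤ l := by linarith
  rcases eq_add_of_cone_sq hu hv hw hF with rfl | rfl | rfl
  · exact ricciDotGradF_sq_add_sq_sq_nonpos hl2 hv hw
  · rw [ricciDotGradF_swap]
    exact ricciDotGradF_sq_add_sq_sq_nonpos hl2 hu hw
  · exact ricciDotGradF_sq_sq_add_sq_nonpos (by linarith) hu hv
end

section
/- There is no continuous section of the restriction of the Gram map γ : X ↦ X Xᵀ from the rank-k matrices supported in the first k columns of gl(r,ℝ) onto the rank-k positive semi-definite symmetric r×r matrices, for 0 < k < r. -/
/-!
Let `a ∈ K` and `b ∉ K`, and let `X(t)` have columns `e_j` for `j ∈ K \ {a}`,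
column `cos t • eₐ + sin t • e_b` at `a`, and zero columns off `K`. Then
`Y(t) = X(t) X(t)ᵀ` is a loop of rank-`|K|` positive semidefinite matrices with
`Y(π) = Y(0)`, although `X(π) = X(0) H` for the reflection `H` in `eₐ`. For a continuous
section `S`, `S Sᵀ = Y` forces `M = Xᵀ S + Q` (`Q` the projection onto the coordinates
off `K`) to be orthogonal, while `M(π) = Hᵀ M(0)`; so `det M` changes sign and vanishes
somewhere by the intermediate value theorem, a contradiction.
-/

open Matrix Real

theorem transpose_mul_add_mul_transpose_eq_one {n R : Type*} [Fintype n] [DecidableEq n]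
    [CommRing R] {X S Q : Matrix n n R} (hQ : Qᵀ = Q) (hQQ : Q * Q = Q)
    (hX : Xᵀ * X + Q = 1) (hS : S * Sᵀ = X * Xᵀ) (hSQ : S * Q = 0) :
    (Xᵀ * S + Q) * (Xᵀ * S + Q)ᵀ = 1 := by
  have hN : (Xᵀ * S) * (Xᵀ * S)ᵀ = 1 - Q := by
    calc (Xᵀ * S) * (Xᵀ * S)ᵀ = Xᵀ * (S * Sᵀ) * X := by
          rw [transpose_mul, transpose_transpose]; simp only [Matrix.mul_assoc]
      _ = (Xᵀ * X) * (Xᵀ * X) := by rw [hS]; simp only [Matrix.mul_assoc]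
      _ = 1 - Q := by
          rw [eq_sub_of_add_eq hX, sub_mul, mul_sub, mul_sub, hQQ]
          simp only [one_mul, mul_one, sub_self, sub_zero]
  have hNQ : (Xᵀ * S) * Qᵀ = 0 := by rw [hQ, Matrix.mul_assoc, hSQ, Matrix.mul_zero]
  have hQN : Q * (Xᵀ * S)ᵀ = 0 := by
    simpa only [transpose_mul, transpose_transpose, transpose_zero] using congrArg transpose hNQ
  rw [transpose_add, add_mul, mul_add, mul_add, hN, hNQ, hQN, hQ, hQQ]
  abel

theorem gram_root_ne_of_orientation_twist {T n : Type*} [TopologicalSpace T] [PreconnectedSpace T]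
    [Fintype n] [DecidableEq n] {Q H : Matrix n n ℝ} (hQ : Qᵀ = Q) (hQQ : Q * Q = Q)
    (hH : H.det = -1) (hHQ : Hᵀ * Q = Q) {X S : T → Matrix n n ℝ} (hXc : Continuous X)
    (hSc : Continuous S) (hX : ∀ t, (X t)ᵀ * X t + Q = 1)
    (hS : ∀ t, S t * (S t)ᵀ = X t * (X t)ᵀ) (hSQ : ∀ t, S t * Q = 0) {a b : T}
    (hab : X b = X a * H) : S b ≠ S a := by
  intro hSab
  set M : T → Matrix n n ℝ := fun t => (X t)ᵀ * S t + Q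
  have hM : ∀ t, (M t).det ≠ 0 := fun t => det_ne_zero_of_right_inverse
    (transpose_mul_add_mul_transpose_eq_one hQ hQQ (hX t) (hS t) (hSQ t))
  have hMab : M b = Hᵀ * M a := by
    simp only [M, hab, hSab, transpose_mul, Matrix.mul_assoc, Matrix.mul_add, hHQ]
  have hdet : (M b).det = -(M a).det := by rw [hMab, det_mul, det_transpose, hH, neg_one_mul]
  have hMc : Continuous fun t => (M t).det := by fun_prop
  obtain ⟨t, ht⟩ : (0 : ℝ) ∈ Set.range fun t => (M t).det := by
    rcases le_total (M a).det 0 with h | h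
    · exact mem_range_of_exists_le_of_exists_ge hMc ⟨a, h⟩ ⟨b, by linarith⟩
    · exact mem_range_of_exists_le_of_exists_ge hMc ⟨b, by linarith⟩ ⟨a, h⟩
  exact hM t ht

theorem mul_diagonal_indicator_compl_eq_zero_iff {m n R : Type*} [Fintype n] [DecidableEq n]
    [Semiring R] (S : Matrix m n R) (K : Set n) [DecidablePred (· ∈ K)] :
    S * diagonal (Kᶜ.indicator (1 : n → R)) = 0 ↔ ∀ i, ∀ j ∉ K, S i j = 0 := by
  simp only [← Matrix.ext_iff, mul_diagonal, Matrix.zero_apply]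
  refine forall_congr' fun i => ⟨fun h j hj => by simpa [hj] using h j, fun h j => ?_⟩
  by_cases hj : j ∈ K <;> simp [hj, h j]

section TwistedFrame
variable {n : Type*} [DecidableEq n] (K : Set n) [DecidablePred (· ∈ K)] (a b : n)

noncomputable def twistedColumn (t : ℝ) (j : n) : n → ℝ :=
  if j = a then cos t • Pi.single a 1 + sin t • Pi.single b 1
  else if j ∈ K then Pi.single j 1 else 0

noncomputable def twistedFrame (t : ℝ) : Matrix n n ℝ :=
  of fun i j => twistedColumn K a b t j i

theorem continuous_twistedFrame : Continuous (twistedFrame K a b) := by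
  refine continuous_matrix fun i j => ?_
  simp only [twistedFrame, of_apply, twistedColumn]
  split_ifs <;> fun_prop

variable {K a b} [Fintype n]

theorem twistedColumn_dotProduct (ha : a ∈ K) (hb : b ∉ K) (t : ℝ) (i j : n) :
    twistedColumn K a b t i ⬝ᵥ twistedColumn K a b t j = diagonal (K.indicator 1) i j := by
  have hab : a ≠ b := by rintro rfl; exact hb ha
  unfold twistedColumn
  split_ifs <;> subst_vars <;>
    simp [diagonal_apply, dotProduct_add, Pi.single_apply, ← sq, *] <;> grind

theorem twistedFrame_transpose_mul_self (ha : a ∈ K) (hb : b ∉ K) (t : ℝ) :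
    (twistedFrame K a b t)ᵀ * twistedFrame K a b t = diagonal (K.indicator 1) := by
  ext i j
  exact twistedColumn_dotProduct ha hb t i j

theorem rank_twistedFrame_mul_transpose (ha : a ∈ K) (hb : b ∉ K) (t : ℝ) :
    (twistedFrame K a b t * (twistedFrame K a b t)ᵀ).rank = Fintype.card K := by
  rw [rank_self_mul_transpose, ← rank_transpose_mul_self,
    twistedFrame_transpose_mul_self ha hb, rank_diagonal]
  exact Fintype.card_congr (Equiv.subtypeEquivRight fun j => by
    by_cases hj : j ∈ K <;> simp [hj])

theorem twistedFrame_pi :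
    twistedFrame K a b π = twistedFrame K a b 0 * diagonal (Function.update 1 a (-1)) := by
  ext i j
  rw [mul_diagonal]
  by_cases hj : j = a <;> simp [twistedFrame, twistedColumn, hj]

theorem twistedFrame_pi_mul_transpose :
    twistedFrame K a b π * (twistedFrame K a b π)ᵀ
      = twistedFrame K a b 0 * (twistedFrame K a b 0)ᵀ := by
  have hH : diagonal (Function.update (1 : n → ℝ) a (-1))
      * (diagonal (Function.update 1 a (-1)))ᵀ = 1 := by
    rw [diagonal_transpose, diagonal_mul_diagonal, ← diagonal_one]
    congr 1
    funext j
    by_cases hj : j = a <;> simp [hj]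
  rw [twistedFrame_pi, transpose_mul, Matrix.mul_assoc, ← Matrix.mul_assoc _ _ (_)ᵀ, hH,
    Matrix.one_mul]

theorem twistedFrame_gram_root_ne (ha : a ∈ K) (hb : b ∉ K) {S : ℝ → Matrix n n ℝ}
    (hSc : Continuous S)
    (hS : ∀ t, S t * (S t)ᵀ = twistedFrame K a b t * (twistedFrame K a b t)ᵀ)
    (hSK : ∀ t, S t * diagonal (Kᶜ.indicator 1) = 0) : S π ≠ S 0 := by
  refine gram_root_ne_of_orientation_twist (diagonal_transpose _) ?_ ?_ ?_
    (continuous_twistedFrame K a b) hSc (fun t => ?_) hS hSK twistedFrame_pi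
  · rw [diagonal_mul_diagonal]
    congr 1
    funext j
    by_cases hj : j ∈ K <;> simp [hj]
  · rw [det_diagonal, Finset.prod_update_of_mem (Finset.mem_univ a)]
    simp
  · rw [diagonal_transpose, diagonal_mul_diagonal]
    congr 1
    funext j
    by_cases hj : j = a <;> simp [hj, ha]
  · rw [twistedFrame_transpose_mul_self ha hb, diagonal_add, ← Pi.add_def,
      Set.indicator_self_add_compl, diagonal_one']

end TwistedFrame

/-- For `0 < k < r` there is no continuous section of the Gram map
`γ(X) = X Xᵀ` from the rank-`k` matrices supported in the first `k` columns
onto the rank-`k` positive semi-definite matrices. -/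
theorem stmt15 (r k : ℕ) (hk : 0 < k) (hkr : k < r) :
    ¬ ∃ s : {A : Matrix (Fin r) (Fin r) ℝ // A.PosSemidef ∧ A.rank = k} →
        Matrix (Fin r) (Fin r) ℝ,
      Continuous s ∧ ∀ Y, (s Y).rank = k ∧
        (∀ i j : Fin r, k ≤ (j : ℕ) → s Y i j = 0) ∧ s Y * (s Y)ᵀ = Y.val := by
  rintro ⟨s, hs_cont, hs⟩
  let K : Set (Fin r) := {j | (j : ℕ) < k}
  have ha : (⟨0, hk.trans hkr⟩ : Fin r) ∈ K := hk
  have hb : (⟨k, hkr⟩ : Fin r) ∉ K := lt_irrefl k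
  set X := twistedFrame K ⟨0, hk.trans hkr⟩ ⟨k, hkr⟩
  let Y : ℝ → {A : Matrix (Fin r) (Fin r) ℝ // A.PosSemidef ∧ A.rank = k} := fun t =>
    ⟨X t * (X t)ᵀ, by simpa using posSemidef_self_mul_conjTranspose (X t),
      by rw [rank_twistedFrame_mul_transpose ha hb]; exact Fintype.card_fin_lt_of_le hkr.le⟩
  have hY : Continuous Y := (continuous_twistedFrame _ _ _).matrix_mul
    (continuous_twistedFrame _ _ _).matrix_transpose |>.subtype_mk _
  refine twistedFrame_gram_root_ne ha hb (hs_cont.comp hY) (fun t => (hs (Y t)).2.2)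
    (fun t => ?_) (congrArg s (Subtype.ext twistedFrame_pi_mul_transpose))
  exact (mul_diagonal_indicator_compl_eq_zero_iff _ K).2 fun i j hj =>
    (hs (Y t)).2.1 i j (not_lt.1 hj)
end

section
/- Let H be the r×r matrix with identity block of size k×k in the upper left and zeros elsewhere, 0 < k < r. Then H is a symmetric projection (H = Hᵀ = H²), the orbit O(r)·H (left multiplication) equals the Stiefel manifold of orthonormal k-frames embedded as the first k columns, and γ⁻¹(H) ∩ gl(r,k) = O(k)·H where O(k) ⊂ O(r) is the block-embedded orthogonal group. -/
/-!
Everything holds for the coordinate projection `P = diag(1_p)` onto an arbitrary set `p` of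
coordinates. If `X = XP` and `XᵀX = P`, the columns of `X` indexed by `p` are orthonormal, and
extending them to an orthonormal basis gives an orthogonal `u` with `uP = X`. If instead
`XXᵀ = P`, then with `Q = 1 - P` we get `QX(QX)ᵀ = QPQ = 0`, so the rows of `X` outside `p`
vanish and `u = X + Q` is orthogonal, equal to the identity off the `p × p` block, with `uP = X`.
Conversely such a `u` satisfies `uQ = Q`, so `uP(uP)ᵀ = (u - Q)uᵀ = 1 - Q = P`.
-/

open Matrix

namespace Matrix

variable {ι R : Type*} [DecidableEq ι]

def coordProj [Zero R] [One R] (p : ι → Prop) [DecidablePred p] : Matrix ι ι R :=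
  diagonal fun i => if p i then 1 else 0

section Semiring

variable [Semiring R] (p : ι → Prop) [DecidablePred p]

@[simp]
theorem coordProj_transpose : (coordProj p : Matrix ι ι R)ᵀ = coordProj p :=
  diagonal_transpose _

theorem coordProj_add_coordProj_not :
    (coordProj p + coordProj (fun i => ¬p i) : Matrix ι ι R) = 1 := by
  rw [coordProj, coordProj, diagonal_add, ← diagonal_one]
  congr 1
  ext i
  by_cases h : p i <;> simp [h]

variable [Fintype ι]

theorem mul_coordProj_apply (X : Matrix ι ι R) (i j : ι) :
    (X * coordProj p : Matrix ι ι R) i j = if p j then X i j else 0 := by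
  simp [coordProj, mul_diagonal]

theorem coordProj_mul_apply (X : Matrix ι ι R) (i j : ι) :
    (coordProj p * X : Matrix ι ι R) i j = if p i then X i j else 0 := by
  simp [coordProj, diagonal_mul]

@[simp]
theorem coordProj_mul_self : (coordProj p * coordProj p : Matrix ι ι R) = coordProj p := by
  rw [coordProj, diagonal_mul_diagonal]
  congr 1
  ext i
  by_cases h : p i <;> simp [h]

@[simp]
theorem coordProj_not_mul_coordProj :
    (coordProj (fun i => ¬p i) * coordProj p : Matrix ι ι R) = 0 := by
  rw [coordProj, coordProj, diagonal_mul_diagonal, ← diagonal_zero]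
  congr 1
  ext i
  by_cases h : p i <;> simp [h]

@[simp]
theorem coordProj_mul_coordProj_not :
    (coordProj p * coordProj (fun i => ¬p i) : Matrix ι ι R) = 0 := by
  rw [coordProj, coordProj, diagonal_mul_diagonal, ← diagonal_zero]
  congr 1
  ext i
  by_cases h : p i <;> simp [h]

theorem mul_coordProj_eq_self_iff {X : Matrix ι ι R} :
    X * coordProj p = X ↔ ∀ i j, ¬p j → X i j = 0 := by
  simp only [← Matrix.ext_iff, mul_coordProj_apply]
  refine forall_congr' fun i => forall_congr' fun j => ?_
  by_cases h : p j <;> simp [h, eq_comm]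

end Semiring

section Real

variable [Fintype ι] (p : ι → Prop) [DecidablePred p]

theorem coordProj_not_mul_eq_zero_of_mul_transpose_eq {X : Matrix ι ι ℝ}
    (hXX : X * Xᵀ = coordProj p) : coordProj (fun i => ¬p i) * X = 0 := by
  rw [← self_mul_conjTranspose_eq_zero, conjTranspose_eq_transpose_of_trivial, transpose_mul,
    coordProj_transpose, Matrix.mul_assoc, ← Matrix.mul_assoc X, hXX, ← Matrix.mul_assoc,
    coordProj_not_mul_coordProj, Matrix.zero_mul]

theorem exists_orthogonal_mul_coordProj_eq {X : Matrix ι ι ℝ} (hX : X * coordProj p = X)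
    (hXX : Xᵀ * X = coordProj p) :
    ∃ u ∈ orthogonalGroup ι ℝ, u * coordProj p = X := by
  let v : ι → EuclideanSpace ℝ ι := fun j => WithLp.toLp 2 fun i => X i j
  have hv : Orthonormal ℝ ({j | p j}.domRestrict v) := by
    rw [orthonormal_iff_ite]
    rintro ⟨i, hi : p i⟩ ⟨j, hj : p j⟩
    have : inner ℝ (v i) (v j) = (Xᵀ * X) i j := by
      simp [v, PiLp.inner_apply, mul_apply, mul_comm]
    simpa [Set.domRestrict, Subtype.ext_iff, hXX, coordProj, diagonal_apply, hi] using this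
  obtain ⟨b, hb⟩ := hv.exists_orthonormalBasis_extension_of_card_eq (by simp)
  refine ⟨(EuclideanSpace.basisFun ι ℝ).toBasis.toMatrix b,
    OrthonormalBasis.toMatrix_orthonormalBasis_mem_orthogonal _ _, ?_⟩
  conv_rhs => rw [← hX]
  ext i j
  simp only [mul_coordProj_apply]
  split_ifs with hj
  · simp [Module.Basis.toMatrix_apply, hb j hj, v]
  · rfl

theorem setOf_orthogonal_mul_coordProj :
    {X | ∃ u ∈ orthogonalGroup ι ℝ, X = u * coordProj p}
      = {X | X * coordProj p = X ∧ Xᵀ * X = coordProj p} := by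
  ext X
  constructor
  · rintro ⟨u, hu, rfl⟩
    refine ⟨by rw [Matrix.mul_assoc, coordProj_mul_self], ?_⟩
    rw [transpose_mul, coordProj_transpose, Matrix.mul_assoc, ← Matrix.mul_assoc uᵀ,
      (mem_orthogonalGroup_iff' _ _).mp hu, Matrix.one_mul, coordProj_mul_self]
  · rintro ⟨hX, hXX⟩
    obtain ⟨u, hu, rfl⟩ := exists_orthogonal_mul_coordProj_eq p hX hXX
    exact ⟨u, hu, rfl⟩

theorem exists_orthogonal_fixing_compl_mul_coordProj_eq {X : Matrix ι ι ℝ}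
    (hX : X * coordProj p = X) (hXX : X * Xᵀ = coordProj p) :
    ∃ u ∈ orthogonalGroup ι ℝ,
      (∀ i j, ¬p i ∨ ¬p j → u i j = (1 : Matrix ι ι ℝ) i j) ∧ u * coordProj p = X := by
  set Q : Matrix ι ι ℝ := coordProj fun i => ¬p i
  have hXQ : X * Q = 0 := by
    rw [← hX, Matrix.mul_assoc, coordProj_mul_coordProj_not, Matrix.mul_zero]
  have hPX : coordProj p * X = X := by
    rw [← add_zero (coordProj p * X), ← coordProj_not_mul_eq_zero_of_mul_transpose_eq p hXX,
      ← Matrix.add_mul, coordProj_add_coordProj_not, Matrix.one_mul]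
  refine ⟨X + Q, ?_, fun i j hij => ?_, ?_⟩
  · have hQT : Qᵀ = Q := coordProj_transpose _
    have hQX : Q * Xᵀ = 0 := by rw [← hQT, ← transpose_mul, hXQ, transpose_zero]
    rw [mem_orthogonalGroup_iff, transpose_add, hQT, Matrix.add_mul, Matrix.mul_add,
      Matrix.mul_add, hXX, hXQ, hQX, coordProj_mul_self, add_zero, zero_add,
      coordProj_add_coordProj_not]
  · have hXij : X i j = 0 := by
      rcases hij with h | h
      · rw [← hPX, coordProj_mul_apply, if_neg h]
      · rw [← hX, mul_coordProj_apply, if_neg h]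
    obtain rfl | hne := eq_or_ne i j
    · simpa [hXij, Q, coordProj] using hij
    · simp [hXij, Q, coordProj, hne]
  · rw [Matrix.add_mul, hX, coordProj_not_mul_coordProj, add_zero]

theorem mul_coordProj_mul_transpose_eq_of_fixing_compl {u : Matrix ι ι ℝ}
    (hu : u ∈ orthogonalGroup ι ℝ) (hfix : ∀ i j, ¬p j → u i j = (1 : Matrix ι ι ℝ) i j) :
    u * coordProj p * (u * coordProj p)ᵀ = coordProj p := by
  set Q : Matrix ι ι ℝ := coordProj fun i => ¬p i
  have huQ : u * Q = Q := by
    conv_rhs => rw [← Matrix.one_mul Q]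
    ext i j
    simp only [Q, mul_coordProj_apply]
    split_ifs with h
    exacts [rfl, hfix i j h]
  have huP : u * coordProj p = u - Q := by
    rw [eq_sub_iff_add_eq, ← huQ, ← Matrix.mul_add, coordProj_add_coordProj_not, Matrix.mul_one]
  have huuT : u * uᵀ = 1 := (mem_orthogonalGroup_iff _ _).mp hu
  calc u * coordProj p * (u * coordProj p)ᵀ = (u - Q) * uᵀ := by
        rw [transpose_mul, coordProj_transpose, Matrix.mul_assoc, ← Matrix.mul_assoc (coordProj p),
          coordProj_mul_self, ← Matrix.mul_assoc, huP]
    _ = 1 - (u * Q)ᵀ := by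
        rw [Matrix.sub_mul, huuT, transpose_mul, coordProj_transpose]
    _ = coordProj p := by
        rw [huQ, coordProj_transpose, ← coordProj_add_coordProj_not p, add_sub_cancel_right]

theorem setOf_mul_transpose_eq_coordProj :
    {X | X * coordProj p = X ∧ X * Xᵀ = coordProj p}
      = {X | ∃ u ∈ orthogonalGroup ι ℝ,
          (∀ i j, ¬p i ∨ ¬p j → u i j = (1 : Matrix ι ι ℝ) i j) ∧ X = u * coordProj p} := by
  ext X
  constructor
  · rintro ⟨hX, hXX⟩
    obtain ⟨u, hu, hfix, rfl⟩ := exists_orthogonal_fixing_compl_mul_coordProj_eq p hX hXX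
    exact ⟨u, hu, hfix, rfl⟩
  · rintro ⟨u, hu, hfix, rfl⟩
    exact ⟨by rw [Matrix.mul_assoc, coordProj_mul_self],
      mul_coordProj_mul_transpose_eq_of_fixing_compl p hu fun i j h => hfix i j (Or.inr h)⟩

end Real

end Matrix

theorem stmt16_general (r k : ℕ) :
    let H : Matrix (Fin r) (Fin r) ℝ :=
      Matrix.of fun i j => if i = j ∧ (i : ℕ) < k then 1 else 0
    Hᵀ = H ∧ H * H = H ∧
    ({X : Matrix (Fin r) (Fin r) ℝ |
        ∃ u ∈ Matrix.orthogonalGroup (Fin r) ℝ, X = u * H}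
      = {X | (∀ i j : Fin r, k ≤ (j : ℕ) → X i j = 0) ∧ Xᵀ * X = H}) ∧
    ({X : Matrix (Fin r) (Fin r) ℝ |
        (∀ i j : Fin r, k ≤ (j : ℕ) → X i j = 0) ∧ X * Xᵀ = H}
      = {X | ∃ u ∈ Matrix.orthogonalGroup (Fin r) ℝ,
          (∀ i j : Fin r, (k ≤ (i : ℕ) ∨ k ≤ (j : ℕ)) →
            u i j = if i = j then 1 else 0) ∧ X = u * H}) := by
  intro H
  have hH : H = coordProj fun i : Fin r => (i : ℕ) < k := by
    ext i j
    by_cases h : i = j <;> simp [H, coordProj, h]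
  have hcols (X : Matrix (Fin r) (Fin r) ℝ) :
      (∀ i j : Fin r, k ≤ (j : ℕ) → X i j = 0) ↔ X * H = X := by
    simp only [hH, mul_coordProj_eq_self_iff, not_lt]
  simp only [hcols]
  rw [hH]
  refine ⟨coordProj_transpose _, coordProj_mul_self _, setOf_orthogonal_mul_coordProj _, ?_⟩
  simpa only [not_lt, one_apply] using setOf_mul_transpose_eq_coordProj fun i : Fin r => (i : ℕ) < k

/-- For the projection `H = diag(I_k, 0)` with `0 < k < r`: `H` is a symmetric
projection, the orbit `O(r)·H` is the Stiefel manifold of orthonormal `k`-frames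
embedded as the first `k` columns, and `γ⁻¹(H) ∩ gl(r,k) = O(k)·H` for the
block-embedded `O(k)`. -/
theorem stmt16 (r k : ℕ) (hk : 0 < k) (hkr : k < r) :
    let H : Matrix (Fin r) (Fin r) ℝ :=
      Matrix.of fun i j => if i = j ∧ (i : ℕ) < k then 1 else 0
    Hᵀ = H ∧ H * H = H ∧
    ({X : Matrix (Fin r) (Fin r) ℝ |
        ∃ u ∈ Matrix.orthogonalGroup (Fin r) ℝ, X = u * H}
      = {X | (∀ i j : Fin r, k ≤ (j : ℕ) → X i j = 0) ∧ Xᵀ * X = H}) ∧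
    ({X : Matrix (Fin r) (Fin r) ℝ |
        (∀ i j : Fin r, k ≤ (j : ℕ) → X i j = 0) ∧ X * Xᵀ = H}
      = {X | ∃ u ∈ Matrix.orthogonalGroup (Fin r) ℝ,
          (∀ i j : Fin r, (k ≤ (i : ℕ) ∨ k ≤ (j : ℕ)) →
            u i j = if i = j then 1 else 0) ∧ X = u * H}) :=
  stmt16_general r k
end

section
/- The convex hull of the image of the map μ⁽¹⁾ : ℝ² → ℝ³, (h₁, h₂) ↦ (h₁², h₂², (h₁ + h₂)²), equals the image of the map μ⁽²⁾ : (ℝ²)² → ℝ³, ((h₁,k₁),(h₂,k₂)) ↦ (h₁² + k₁², h₂² + k₂², (h₁+h₂)² + (k₁+k₂)²). -/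
/-!
Writing `μ⁽²⁾((h₁,k₁),(h₂,k₂)) = μ⁽¹⁾(h₁,h₂) + μ⁽¹⁾(k₁,k₂)` and using that the image of `μ⁽¹⁾` is
a cone, every point of the image of `μ⁽²⁾` is the midpoint of two points of the image of `μ⁽¹⁾`.
Conversely, `μ⁽²⁾((h₁,k₁),(h₂,k₂))` is a linear function of the Gram matrix of the vectors
`(h₁,k₁)` and `(h₂,k₂)`. Gram matrices of pairs of vectors in `ℝ²` are exactly the positive
semidefinite `2 × 2` matrices, which form a convex set, so the image of `μ⁽²⁾` is convex and
contains the image of `μ⁽¹⁾`.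
-/

open Set
open scoped MatrixOrder

theorem add_mem_convexHull_of_two_smul_mem {𝕜 E : Type*} [Field 𝕜] [LinearOrder 𝕜]
    [IsStrictOrderedRing 𝕜] [AddCommGroup E] [Module 𝕜 E] {s : Set E}
    (hs : ∀ x ∈ s, (2 : 𝕜) • x ∈ s) {x y : E} (hx : x ∈ s) (hy : y ∈ s) :
    x + y ∈ convexHull 𝕜 s := by
  have hmid := convex_convexHull 𝕜 s (subset_convexHull 𝕜 s (hs x hx))
    (subset_convexHull 𝕜 s (hs y hy)) (by norm_num : (0 : 𝕜) ≤ 2⁻¹) (by norm_num : (0 : 𝕜) ≤ 2⁻¹)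
    (by norm_num)
  rwa [smul_smul, smul_smul, inv_mul_cancel₀ two_ne_zero, one_smul, one_smul] at hmid

theorem Matrix.range_star_mul_self_eq_Ici {n 𝕜 : Type*} [Fintype n] [DecidableEq n] [RCLike 𝕜] :
    range (fun B : Matrix n n 𝕜 => star B * B) = Ici 0 := by
  ext a
  rw [mem_Ici, CStarAlgebra.nonneg_iff_eq_star_mul_self]
  simp only [mem_range, eq_comm]

def mu₁ (H : ℝ × ℝ) : ℝ × ℝ × ℝ :=
  (H.1 ^ 2, H.2 ^ 2, (H.1 + H.2) ^ 2)

def mu₂ (H : (ℝ × ℝ) × (ℝ × ℝ)) : ℝ × ℝ × ℝ :=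
  (H.1.1 ^ 2 + H.1.2 ^ 2, H.2.1 ^ 2 + H.2.2 ^ 2, (H.1.1 + H.2.1) ^ 2 + (H.1.2 + H.2.2) ^ 2)

theorem mu₂_eq_add (H : (ℝ × ℝ) × (ℝ × ℝ)) : mu₂ H = mu₁ (H.1.1, H.2.1) + mu₁ (H.1.2, H.2.2) := by
  simp only [mu₁, mu₂, Prod.mk_add_mk]

theorem mu₁_smul (c : ℝ) (H : ℝ × ℝ) : mu₁ (c • H) = c ^ 2 • mu₁ H := by
  simp only [mu₁, Prod.smul_fst, Prod.smul_snd, Prod.smul_mk, smul_eq_mul, Prod.mk.injEq]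
  refine ⟨?_, ?_, ?_⟩ <;> ring

theorem two_smul_mem_range_mu₁ : ∀ x ∈ range mu₁, (2 : ℝ) • x ∈ range mu₁ := by
  rintro _ ⟨H, rfl⟩
  refine ⟨Real.sqrt 2 • H, ?_⟩
  rw [mu₁_smul, Real.sq_sqrt zero_le_two]

theorem range_mu₁_subset_range_mu₂ : range mu₁ ⊆ range mu₂ := by
  rintro _ ⟨H, rfl⟩
  exact ⟨((H.1, 0), (H.2, 0)), by simp [mu₁, mu₂]⟩

def gramCoords : Matrix (Fin 2) (Fin 2) ℝ →ₗ[ℝ] ℝ × ℝ × ℝ where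
  toFun G := (G 0 0, G 1 1, G 0 0 + G 1 1 + G 0 1 + G 1 0)
  map_add' G G' := by
    simp only [Matrix.add_apply, Prod.mk_add_mk]
    ring_nf
  map_smul' c G := by
    simp only [Matrix.smul_apply, smul_eq_mul, RingHom.id_apply, Prod.smul_mk]
    ring_nf

def ofCols (H : (ℝ × ℝ) × (ℝ × ℝ)) : Matrix (Fin 2) (Fin 2) ℝ :=
  !![H.1.1, H.2.1; H.1.2, H.2.2]

theorem ofCols_surjective : Function.Surjective ofCols :=
  fun B => ⟨((B 0 0, B 1 0), (B 0 1, B 1 1)), (Matrix.eta_fin_two B).symm⟩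

theorem mu₂_eq_gramCoords (H : (ℝ × ℝ) × (ℝ × ℝ)) :
    mu₂ H = gramCoords (star (ofCols H) * ofCols H) := by
  simp only [mu₂, gramCoords, ofCols, LinearMap.coe_mk, AddHom.coe_mk, Matrix.mul_apply,
    Matrix.star_apply, Matrix.of_apply, Matrix.cons_val', Matrix.cons_val_zero,
    Matrix.cons_val_fin_one, Matrix.cons_val_one, star_trivial, Fin.sum_univ_two, Prod.mk.injEq]
  refine ⟨?_, ?_, ?_⟩ <;> ring

theorem range_mu₂ : range mu₂ = gramCoords '' Ici 0 := by
  rw [← Matrix.range_star_mul_self_eq_Ici, ← range_comp, ← ofCols_surjective.range_comp]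
  exact congrArg range (funext mu₂_eq_gramCoords)

theorem convex_range_mu₂ : Convex ℝ (range mu₂) :=
  range_mu₂ ▸ (convex_Ici 0).linear_image gramCoords

/-- The convex hull of the image of `μ⁽¹⁾(h₁,h₂) = (h₁², h₂², (h₁+h₂)²)` equals
the image of `μ⁽²⁾((h₁,k₁),(h₂,k₂)) = (h₁²+k₁², h₂²+k₂², (h₁+h₂)²+(k₁+k₂)²)`. -/
theorem stmt19 :
    convexHull ℝ
        (Set.range fun H : ℝ × ℝ => (H.1 ^ 2, H.2 ^ 2, (H.1 + H.2) ^ 2))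
      = Set.range (fun H : (ℝ × ℝ) × (ℝ × ℝ) =>
          ((H.1.1 ^ 2 + H.1.2 ^ 2, H.2.1 ^ 2 + H.2.2 ^ 2,
            (H.1.1 + H.2.1) ^ 2 + (H.1.2 + H.2.2) ^ 2) : ℝ × ℝ × ℝ)) := by
  change convexHull ℝ (range mu₁) = range mu₂
  refine (convexHull_min range_mu₁_subset_range_mu₂ convex_range_mu₂).antisymm ?_
  rintro _ ⟨H, rfl⟩
  rw [mu₂_eq_add]
  exact add_mem_convexHull_of_two_smul_mem two_smul_mem_range_mu₁
    (mem_range_self _) (mem_range_self _)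
end
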